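/- arXiv:math/0505353 — 2 statements merged into one kernel-verified Lean document; each statement's English description precedes it below -/
import Mathlib

section
/- Proposition 3.2, (i) ⇒ (ii). Suppose system (1.2) satisfies hypotheses (A1) and (H2) and satisfies the non-uniform in time IOS property. Then there exist functions ζ ∈ K∞, β, δ ∈ K⁺ and σ ∈ KL such that for every t₀ ∈ ℕ, x₀ ∈ X, d : ℕ → D, u : ℕ → U, the corresponding solution x(·) of (1.2) with x(t₀) = x₀ satisfies ‖H(t, x(t))‖_Y ≤ max{ σ(β(t₀)‖x₀‖_X, t − t₀), sup_{t₀ ≤ τ ≤ t} ζ(δ(τ)‖u(τ)‖_U) } for all t ≥ t₀. -/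
/-!
Since `σ` is non-increasing in time, the input term `σ(β(τ) ρ(γ(τ) ‖u(τ)‖), t - τ)` of the
IOS estimate is at most `κ_τ(‖u(τ)‖)` with `κ_n(s) = σ(β(n) ρ(γ(n) s), 0)`. It therefore
suffices to dominate the countable family of class-`K` functions `κ_n` by one `K∞` function
with a time-varying gain, `κ_n(s) ≤ ζ(δ(n) s)`. Below a level `B_n` where `κ_n ≤ 2⁻ⁿ`, this
is done by the sum of the `κ_n` truncated at `B_n`; above it, a gain
`δ(n) ≥ 1 + (n + 2) / B_n` gives `δ(n) s ≥ n + s + 2`, and there a continuous monotone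
interpolation of `m ↦ ∑_{j ≤ m} κ_j(m)` dominates `κ_n(s)`.
-/

open Filter Topology Bornology Set

noncomputable section

/-- Class `K∞`: continuous, strictly increasing on `[0,∞)`, zero at zero, unbounded. -/
def IsKInf (a : ℝ → ℝ) : Prop :=
  ContinuousOn a (Set.Ici 0) ∧ StrictMonoOn a (Set.Ici 0) ∧ a 0 = 0 ∧
    Filter.Tendsto a Filter.atTop Filter.atTop

/-- Class `K⁺`: continuous and positive on `[0,∞)`. -/
def IsKPlus (b : ℝ → ℝ) : Prop :=
  ContinuousOn b (Set.Ici 0) ∧ ∀ t : ℝ, 0 ≤ t → 0 < b t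

/-- Class `KL`. -/
def IsKL (σ : ℝ → ℝ → ℝ) : Prop :=
  ContinuousOn (fun p : ℝ × ℝ => σ p.1 p.2) (Set.Ici 0 ×ˢ Set.Ici 0) ∧
  (∀ t : ℝ, 0 ≤ t → StrictMonoOn (fun s => σ s t) (Set.Ici 0) ∧ σ 0 t = 0) ∧
  (∀ s : ℝ, 0 ≤ s → AntitoneOn (fun t => σ s t) (Set.Ici 0) ∧
    Filter.Tendsto (fun t => σ s t) Filter.atTop (nhds 0))

namespace Set.Finite

theorem ciSup₂_mono {ι α : Type*} [ConditionallyCompleteLattice α] {s : Set ι} (hs : s.Finite)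
    {f g : ι → α} (h : ∀ i ∈ s, f i ≤ g i) : ⨆ i ∈ s, f i ≤ ⨆ i ∈ s, g i := by
  have hbdd : BddAbove (⋃ i, range fun _ : i ∈ s => g i) :=
    (hs.image g).bddAbove.mono <|
      iUnion_subset fun _ => range_subset_iff.2 fun hi => mem_image_of_mem g hi
  exact ciSup_mono hbdd.range_iSup_of_iUnion_range fun i =>
    ciSup_mono (finite_range _).bddAbove (h i)

end Set.Finite

theorem IsKInf.nonneg {ρ : ℝ → ℝ} (hρ : IsKInf ρ) {s : ℝ} (hs : 0 ≤ s) : 0 ≤ ρ s :=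
  hρ.2.2.1 ▸ hρ.2.1.monotoneOn self_mem_Ici hs hs

theorem isKInf_id_add {F : ℝ → ℝ} (hc : Continuous F) (hm : Monotone F) (h0 : F 0 = 0) :
    IsKInf fun r => r + F r := by
  refine ⟨(continuous_id.add hc).continuousOn, (strictMono_id.add_monotone hm).strictMonoOn _,
    by simp [h0], tendsto_atTop_mono' _ ?_ tendsto_id⟩
  filter_upwards [eventually_ge_atTop 0] with r hr
  simpa [h0] using hm hr

/-- Piecewise linear, with slope `c n` on `[n, n + 1]` and zero on `(-∞, 0]`. -/
def partialSumInterp (c : ℕ → ℝ) (t : ℝ) : ℝ :=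
  ∑' n, c n * projIcc (0 : ℝ) 1 zero_le_one (t - n)

namespace partialSumInterp

variable (c : ℕ → ℝ)

theorem term_eq_zero {t : ℝ} {n : ℕ} (hn : t ≤ n) :
    c n * projIcc (0 : ℝ) 1 zero_le_one (t - n) = 0 := by
  rw [projIcc_of_le_left zero_le_one (by linarith), Subtype.coe_mk, mul_zero]

theorem eq_sum {t : ℝ} {N : ℕ} (hN : t ≤ N) :
    partialSumInterp c t = ∑ n ∈ Finset.range N, c n * projIcc (0 : ℝ) 1 zero_le_one (t - n) :=
  tsum_eq_sum fun n hn => term_eq_zero c <| hN.trans <| by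
    exact_mod_cast not_lt.1 (Finset.mem_range.not.1 hn)

theorem summable (t : ℝ) : Summable fun n => c n * projIcc (0 : ℝ) 1 zero_le_one (t - n) :=
  summable_of_ne_finset_zero (s := Finset.range ⌈t⌉₊) fun n hn => term_eq_zero c <|
    (Nat.le_ceil t).trans <| by exact_mod_cast not_lt.1 (Finset.mem_range.not.1 hn)

theorem natCast (N : ℕ) : partialSumInterp c N = ∑ n ∈ Finset.range N, c n := by
  rw [eq_sum c le_rfl]
  refine Finset.sum_congr rfl fun n hn => ?_
  have : (1 : ℝ) ≤ N - n := by
    have : (n : ℝ) + 1 ≤ N := by exact_mod_cast Finset.mem_range.1 hn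
    linarith
  rw [projIcc_of_right_le zero_le_one this, Subtype.coe_mk, mul_one]

theorem continuous : Continuous (partialSumInterp c) := by
  refine continuous_iff_continuousAt.2 fun t₀ => ?_
  have hfin : Continuous fun t : ℝ =>
      ∑ n ∈ Finset.range (⌈t₀⌉₊ + 1), c n * projIcc (0 : ℝ) 1 zero_le_one (t - n) := by
    fun_prop
  refine hfin.continuousAt.congr ?_
  have ht₀ : t₀ < ((⌈t₀⌉₊ + 1 : ℕ) : ℝ) := by push_cast; linarith [Nat.le_ceil t₀]
  filter_upwards [Iio_mem_nhds ht₀] with t ht using (eq_sum c ht.le).symm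

variable {c}

theorem nonneg (hc : ∀ n, 0 ≤ c n) (t : ℝ) : 0 ≤ partialSumInterp c t :=
  tsum_nonneg fun n => mul_nonneg (hc n) (projIcc _ _ _ _).2.1

theorem monotone (hc : ∀ n, 0 ≤ c n) : Monotone (partialSumInterp c) := fun _ _ hab =>
  (summable c _).tsum_le_tsum (fun n => mul_le_mul_of_nonneg_left
    (monotone_projIcc _ (sub_le_sub_right hab _)) (hc n)) (summable c _)

end partialSumInterp

theorem exists_continuous_monotone_dominating_seq (a : ℕ → ℝ) :
    ∃ Φ : ℝ → ℝ, Continuous Φ ∧ Monotone Φ ∧ Φ 0 = 0 ∧ (∀ r, 0 ≤ Φ r) ∧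
      ∀ n : ℕ, a n ≤ Φ (n + 1) := by
  have hc : ∀ n, 0 ≤ max (a n) 0 := fun n => le_max_right _ _
  refine ⟨partialSumInterp fun n => max (a n) 0, partialSumInterp.continuous _,
    partialSumInterp.monotone hc, by simpa using partialSumInterp.natCast _ 0,
    partialSumInterp.nonneg hc, fun n => ?_⟩
  rw [← Nat.cast_succ, partialSumInterp.natCast, Finset.sum_range_succ]
  linarith [le_max_left (a n) 0, Finset.sum_nonneg fun k (_ : k ∈ Finset.range n) => hc k]

theorem exists_continuous_monotone_dominating_near_zero (κ : ℕ → ℝ → ℝ)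
    (hcont : ∀ n, ContinuousOn (κ n) (Ici 0)) (hmono : ∀ n, MonotoneOn (κ n) (Ici 0))
    (hzero : ∀ n, κ n 0 = 0) :
    ∃ G : ℝ → ℝ, Continuous G ∧ Monotone G ∧ G 0 = 0 ∧ (∀ r, 0 ≤ G r) ∧
      ∃ B : ℕ → ℝ, (∀ n, 0 < B n) ∧ ∀ n, ∀ s ∈ Icc 0 (B n), κ n s ≤ G s := by
  have hsmall : ∀ n : ℕ, ∃ b > 0, κ n b ≤ (1 / 2) ^ n := by
    intro n
    have hlt : ∀ᶠ b in 𝓝[>] (0 : ℝ), κ n b < (1 / 2) ^ n :=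
      nhdsWithin_mono _ Ioi_subset_Ici_self <| (hcont n 0 self_mem_Ici).eventually <|
        gt_mem_nhds <| by rw [hzero n]; positivity
    obtain ⟨b, hb, hb0⟩ := (hlt.and self_mem_nhdsWithin).exists
    exact ⟨b, hb0, hb.le⟩
  choose B hB hBsmall using hsmall
  set g : ℕ → ℝ → ℝ := fun n r => κ n (projIcc 0 (B n) (hB n).le r)
  have hmem : ∀ n r, (projIcc 0 (B n) (hB n).le r : ℝ) ∈ Ici 0 := fun n r =>
    (projIcc _ _ _ r).2.1
  have hg_nonneg : ∀ n r, 0 ≤ g n r := fun n r =>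
    hzero n ▸ hmono n self_mem_Ici (hmem n r) (hmem n r)
  have hg_le : ∀ n r, g n r ≤ (1 / 2) ^ n := fun n r =>
    (hmono n (hmem n r) (hB n).le (projIcc _ _ _ r).2.2).trans (hBsmall n)
  have hgeom : Summable fun n : ℕ => ((1 : ℝ) / 2) ^ n :=
    summable_geometric_of_lt_one (by norm_num) (by norm_num)
  have hg_summable : ∀ r, Summable (g · r) := fun r =>
    hgeom.of_nonneg_of_le (hg_nonneg · r) (hg_le · r)
  refine ⟨fun r => ∑' n, g n r, ?_, fun a b hab => ?_, ?_, fun r => tsum_nonneg (hg_nonneg · r),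
    B, hB, fun n s hs => ?_⟩
  · refine continuous_tsum (fun n => (hcont n).comp_continuous
      (continuous_subtype_val.comp continuous_projIcc) (hmem n)) hgeom fun n r => ?_
    rw [Real.norm_of_nonneg (hg_nonneg n r)]
    exact hg_le n r
  · exact (hg_summable a).tsum_le_tsum
      (fun n => hmono n (hmem n a) (hmem n b) (monotone_projIcc _ hab)) (hg_summable b)
  · simp [g, projIcc_left, hzero]
  · calc κ n s = g n s := by simp only [g, projIcc_of_mem _ hs]
      _ ≤ ∑' n, g n s := (hg_summable s).le_tsum n fun j _ => hg_nonneg j s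

theorem exists_isKInf_isKPlus_dominating (κ : ℕ → ℝ → ℝ)
    (hcont : ∀ n, ContinuousOn (κ n) (Ici 0)) (hmono : ∀ n, MonotoneOn (κ n) (Ici 0))
    (hzero : ∀ n, κ n 0 = 0) :
    ∃ ζ δ : ℝ → ℝ, IsKInf ζ ∧ IsKPlus δ ∧ ∀ (n : ℕ) (s : ℝ), 0 ≤ s → κ n s ≤ ζ (δ n * s) := by
  obtain ⟨G, hGc, hGm, hG0, hGnn, B, hB, hκG⟩ :=
    exists_continuous_monotone_dominating_near_zero κ hcont hmono hzero
  obtain ⟨Φ, hΦc, hΦm, hΦ0, hΦnn, hΦ⟩ :=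
    exists_continuous_monotone_dominating_seq fun m => ∑ j ∈ Finset.range (m + 1), κ j m
  obtain ⟨Ψ, hΨc, -, -, hΨnn, hΨ⟩ :=
    exists_continuous_monotone_dominating_seq fun n => 1 + (n + 2) / B n
  have hζ := isKInf_id_add (hGc.add hΦc) (hGm.add hΦm) (by simp [hG0, hΦ0])
  refine ⟨fun r => r + (G r + Φ r), fun t => 1 + Ψ (t + 1), hζ,
    ⟨by fun_prop, fun t _ => by linarith [hΨnn (t + 1)]⟩, fun n s hs => ?_⟩
  set d : ℝ := 1 + (n + 2) / B n
  have hd : 1 ≤ d := le_add_of_nonneg_right (div_nonneg (by positivity) (hB n).le)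
  have hds : 0 ≤ d * s := mul_nonneg (zero_le_one.trans hd) hs
  have hdδ : d * s ≤ (1 + Ψ (n + 1)) * s :=
    mul_le_mul_of_nonneg_right ((hΨ n).trans (le_add_of_nonneg_left zero_le_one)) hs
  suffices κ n s ≤ d * s + (G (d * s) + Φ (d * s)) from
    this.trans (hζ.2.1.monotoneOn hds (hds.trans hdδ) hdδ)
  rcases le_or_gt s (B n) with hsB | hBs
  · have := (hκG n s ⟨hs, hsB⟩).trans (hGm (le_mul_of_one_le_left hs hd))
    linarith [hΦnn (d * s)]
  · set M := n + ⌈s⌉₊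
    have hM : (M : ℝ) + 1 ≤ d * s := by
      have : (n + 2 : ℝ) ≤ (n + 2) / B n * s := by
        rw [div_mul_eq_mul_div, le_div_iff₀ (hB n)]
        exact mul_le_mul_of_nonneg_left hBs.le (by positivity)
      push_cast [M, d]
      linarith [Nat.ceil_lt_add_one hs]
    calc κ n s ≤ κ n M := hmono n hs (mem_Ici.2 M.cast_nonneg) <| by
          push_cast [M]; linarith [Nat.le_ceil s, (Nat.cast_nonneg n : (0 : ℝ) ≤ n)]
      _ ≤ ∑ j ∈ Finset.range (M + 1), κ j M :=
          Finset.single_le_sum (fun j _ => hzero j ▸ hmono j self_mem_Ici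
            (mem_Ici.2 M.cast_nonneg) M.cast_nonneg) (Finset.mem_range.2 (by omega))
      _ ≤ Φ (M + 1) := hΦ M
      _ ≤ Φ (d * s) := hΦm hM
      _ ≤ d * s + (G (d * s) + Φ (d * s)) := by linarith [hGnn (d * s)]

theorem IsKL.apply_le_apply_zero {σ : ℝ → ℝ → ℝ} (hσ : IsKL σ) {s t : ℝ} (hs : 0 ≤ s)
    (ht : 0 ≤ t) : σ s t ≤ σ s 0 :=
  (hσ.2.2 s hs).1 self_mem_Ici ht ht

section InputGain

variable {σ : ℝ → ℝ → ℝ} {ρ : ℝ → ℝ} (hσ : IsKL σ) (hρ : IsKInf ρ) {b c : ℝ} (hb : 0 ≤ b)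
  (hc : 0 ≤ c)
include hσ hρ hb hc

theorem IsKL.continuousOn_apply_zero_comp :
    ContinuousOn (fun s => σ (b * ρ (c * s)) 0) (Ici 0) := by
  have hρc : ContinuousOn (fun s => b * ρ (c * s)) (Ici 0) :=
    continuousOn_const.mul <| hρ.1.comp (by fun_prop) fun s hs => mul_nonneg hc hs
  exact hσ.1.comp (hρc.prodMk continuousOn_const) fun s hs =>
    ⟨mul_nonneg hb (hρ.nonneg (mul_nonneg hc hs)), self_mem_Ici⟩

theorem IsKL.monotoneOn_apply_zero_comp :
    MonotoneOn (fun s => σ (b * ρ (c * s)) 0) (Ici 0) := fun _ hx _ hy hxy =>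
  (hσ.2.1 0 le_rfl).1.monotoneOn (mul_nonneg hb (hρ.nonneg (mul_nonneg hc hx)))
    (mul_nonneg hb (hρ.nonneg (mul_nonneg hc hy))) <| mul_le_mul_of_nonneg_left
      (hρ.2.1.monotoneOn (mul_nonneg hc hx) (mul_nonneg hc hy)
        (mul_le_mul_of_nonneg_left hxy hc)) hb

end InputGain

theorem prop32_i_implies_ii_general {X Y U D : Type*}
    [NormedAddCommGroup X] [NormedAddCommGroup Y] [NormedAddCommGroup U]
    (f : ℕ → D → X → U → X) (H : ℕ → X → Y)
    (hIOS : ∃ (σ : ℝ → ℝ → ℝ) (β γ ρ : ℝ → ℝ),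
      IsKL σ ∧ IsKPlus β ∧ IsKPlus γ ∧ IsKInf ρ ∧
      ∀ (d : ℕ → D) (u : ℕ → U) (t₀ : ℕ) (x₀ : X) (x : ℕ → X),
        x t₀ = x₀ → (∀ t, t₀ ≤ t → x (t + 1) = f t (d t) (x t) (u t)) →
        ∀ t, t₀ ≤ t →
          ‖H t (x t)‖ ≤ max (σ (β t₀ * ‖x₀‖) ((t : ℝ) - (t₀ : ℝ)))
            (⨆ τ ∈ Set.Icc t₀ t, σ (β τ * ρ (γ τ * ‖u τ‖)) ((t : ℝ) - (τ : ℝ)))) :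
    ∃ (ζ : ℝ → ℝ) (β δ : ℝ → ℝ) (σ : ℝ → ℝ → ℝ),
      IsKInf ζ ∧ IsKPlus β ∧ IsKPlus δ ∧ IsKL σ ∧
      ∀ (d : ℕ → D) (u : ℕ → U) (t₀ : ℕ) (x₀ : X) (x : ℕ → X),
        x t₀ = x₀ → (∀ t, t₀ ≤ t → x (t + 1) = f t (d t) (x t) (u t)) →
        ∀ t, t₀ ≤ t →
          ‖H t (x t)‖ ≤ max (σ (β t₀ * ‖x₀‖) ((t : ℝ) - (t₀ : ℝ)))
            (⨆ τ ∈ Set.Icc t₀ t, ζ (δ τ * ‖u τ‖)) := by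
  obtain ⟨σ, β, γ, ρ, hσ, hβ, hγ, hρ, hIOS⟩ := hIOS
  have hβ₀ (n : ℕ) : 0 ≤ β n := (hβ.2 n n.cast_nonneg).le
  have hγ₀ (n : ℕ) : 0 ≤ γ n := (hγ.2 n n.cast_nonneg).le
  obtain ⟨ζ, δ, hζ, hδ, hgain⟩ :=
    exists_isKInf_isKPlus_dominating (fun n s => σ (β n * ρ (γ n * s)) 0)
    (fun n => hσ.continuousOn_apply_zero_comp hρ (hβ₀ n) (hγ₀ n))
    (fun n => hσ.monotoneOn_apply_zero_comp hρ (hβ₀ n) (hγ₀ n))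
    (fun n => by simp [hρ.2.2.1, (hσ.2.1 0 le_rfl).2])
  refine ⟨ζ, β, δ, σ, hζ, hβ, hδ, hσ, fun d u t₀ x₀ x hx₀ hx t ht => ?_⟩
  refine (hIOS d u t₀ x₀ x hx₀ hx t ht).trans <| max_le_max le_rfl <|
    (finite_Icc t₀ t).ciSup₂_mono fun τ hτ => ?_
  have hτt : (τ : ℝ) ≤ t := by exact_mod_cast hτ.2
  exact (hσ.apply_le_apply_zero (mul_nonneg (hβ₀ τ) (hρ.nonneg (mul_nonneg (hγ₀ τ)
    (norm_nonneg _)))) (sub_nonneg.2 hτt)).trans (hgain τ _ (norm_nonneg _))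

/-- Proposition 3.2, (i) ⇒ (ii). -/
theorem prop32_i_implies_ii {X Y U D : Type*}
    [NormedAddCommGroup X] [NormedSpace ℝ X] [NormedAddCommGroup Y] [NormedSpace ℝ Y]
    [NormedAddCommGroup U] [NormedSpace ℝ U] [Nonempty D]
    (f : ℕ → D → X → U → X) (H : ℕ → X → Y)
    (hf0 : ∀ (t : ℕ) (d : D), f t d 0 0 = 0) (hH0 : ∀ t : ℕ, H t 0 = 0)
    (hA1 : ∃ a β : ℝ → ℝ, IsKInf a ∧ IsKPlus β ∧
      ∀ (t : ℕ) (d : D) (x : X) (u : U),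
        ‖f t d x u‖ ≤ a (β t * ‖x‖) + a (β t * ‖u‖))
    (hH2 : ∀ (T : ℕ) (S : Set X), Bornology.IsBounded S → ∀ ε > (0 : ℝ),
      Bornology.IsBounded {y : Y | ∃ t ≤ T, ∃ x ∈ S, y = H t x} ∧
      ∃ δ > (0 : ℝ), ∀ t ≤ T, ∀ x ∈ S, ∀ x₀ ∈ S, ‖x - x₀‖ < δ → ‖H t x - H t x₀‖ < ε)
    (hIOS : ∃ (σ : ℝ → ℝ → ℝ) (β γ ρ : ℝ → ℝ),
      IsKL σ ∧ IsKPlus β ∧ IsKPlus γ ∧ IsKInf ρ ∧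
      ∀ (d : ℕ → D) (u : ℕ → U) (t₀ : ℕ) (x₀ : X) (x : ℕ → X),
        x t₀ = x₀ → (∀ t, t₀ ≤ t → x (t + 1) = f t (d t) (x t) (u t)) →
        ∀ t, t₀ ≤ t →
          ‖H t (x t)‖ ≤ max (σ (β t₀ * ‖x₀‖) ((t : ℝ) - (t₀ : ℝ)))
            (⨆ τ ∈ Set.Icc t₀ t, σ (β τ * ρ (γ τ * ‖u τ‖)) ((t : ℝ) - (τ : ℝ)))) :
    ∃ (ζ : ℝ → ℝ) (β δ : ℝ → ℝ) (σ : ℝ → ℝ → ℝ),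
      IsKInf ζ ∧ IsKPlus β ∧ IsKPlus δ ∧ IsKL σ ∧
      ∀ (d : ℕ → D) (u : ℕ → U) (t₀ : ℕ) (x₀ : X) (x : ℕ → X),
        x t₀ = x₀ → (∀ t, t₀ ≤ t → x (t + 1) = f t (d t) (x t) (u t)) →
        ∀ t, t₀ ≤ t →
          ‖H t (x t)‖ ≤ max (σ (β t₀ * ‖x₀‖) ((t : ℝ) - (t₀ : ℝ)))
            (⨆ τ ∈ Set.Icc t₀ t, ζ (δ τ * ‖u τ‖)) :=
  prop32_i_implies_ii_general f H hIOS
end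
end

section
/- Proposition 3.2, (iv) ⇒ (i) (Lyapunov sufficiency for IOS). Suppose system (1.2) satisfies hypotheses (A1) and (H2), and suppose there exist a function V : ℕ × X → [0,∞), functions a₁, a₂, a₃ ∈ K∞, functions β, φ, μ ∈ K⁺ and a constant λ ∈ (0,1) such that: a₁(‖H(t,x)‖_Y + μ(t)‖x‖_X) ≤ V(t,x) ≤ a₂(β(t)‖x‖_X) for all (t,x) ∈ ℕ × X, and V(t+1, f(t,d,x,u)) ≤ λ·V(t,x) + a₃(φ(t)‖u‖_U) for all (t,x,d,u) ∈ ℕ × X × D × U. Then system (1.2) satisfies the non-uniform in time IOS property. -/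
open Filter Topology Bornology Set

noncomputable section

/-!
Along a solution, `v t = V t (x t)` satisfies `v (t + 1) ≤ λ v t + b t` with
`b t = a₃ (φ t ‖u t‖)`. Fix `l ∈ (0,1)` with `λ ≤ l²`. Then `λ z + b ≤ max (l z) (b / (1 - l))`,
so by induction `v t` is bounded either by `l ^ (t - t₀) v t₀` or, for some `τ ∈ [t₀, t)`, by
`l ^ (t - τ) b τ / (l (1 - l))`. Since `a₁ ‖H t x‖ ≤ V t x ≤ a₂ (β t ‖x‖)`, applying `a₁⁻¹`
gives the IOS estimate with `σ s t = a₁⁻¹ (a₂ s · l ^ t)`, `β' = β + 1`, `γ = φ` and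
`ρ = a₂⁻¹ ∘ (a₃ / (l (1 - l)))`.
-/

namespace IsKInf

variable {a g : ℝ → ℝ}

lemma monotoneOn (ha : IsKInf a) : MonotoneOn a (Ici 0) :=
  ha.2.1.monotoneOn

lemma nonneg_s9 (ha : IsKInf a) {s : ℝ} (hs : 0 ≤ s) : 0 ≤ a s :=
  ha.2.2.1 ▸ ha.monotoneOn self_mem_Ici hs hs

lemma mapsTo (ha : IsKInf a) : MapsTo a (Ici 0) (Ici 0) :=
  fun _ hs => ha.nonneg_s9 hs

lemma comp (hg : IsKInf g) (ha : IsKInf a) : IsKInf (g ∘ a) :=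
  ⟨hg.1.comp ha.1 ha.mapsTo, hg.2.1.comp ha.2.1 ha.mapsTo, by simp [ha.2.2.1, hg.2.2.1],
    hg.2.2.2.comp ha.2.2.2⟩

lemma mul_const (ha : IsKInf a) {c : ℝ} (hc : 0 < c) : IsKInf (fun s => a s * c) :=
  ⟨ha.1.mul continuousOn_const, fun _ hs _ ht hst => mul_lt_mul_of_pos_right (ha.2.1 hs ht hst) hc,
    by simp [ha.2.2.1], ha.2.2.2.atTop_mul_const hc⟩

lemma surjOn (ha : IsKInf a) : SurjOn a (Ici 0) (Ici 0) := by
  intro r hr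
  obtain ⟨b, hb⟩ := (ha.2.2.2.eventually_ge_atTop r).exists_forall_of_atTop
  obtain ⟨s, hs, rfl⟩ := intermediate_value_Icc (le_max_right b 0) (ha.1.mono Icc_subset_Ici_self)
    ⟨ha.2.2.1.symm ▸ hr, hb _ (le_max_left b 0)⟩
  exact ⟨s, hs.1, rfl⟩

lemma exists_inverse (ha : IsKInf a) :
    ∃ g : ℝ → ℝ, IsKInf g ∧ (∀ r, 0 ≤ r → a (g r) = r) ∧ ∀ s, 0 ≤ s → g (a s) = s := by
  let e : Ici (0 : ℝ) ≃o Ici (0 : ℝ) :=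
    StrictMono.orderIsoOfSurjective (ha.mapsTo.restrict a _ _)
      (fun s t h => ha.2.1 s.2 t.2 h) (ha.mapsTo.restrict_surjective_iff.mpr ha.surjOn)
  have hg_mono : Monotone fun r => (e.symm (projIci 0 r) : ℝ) :=
    fun _ _ h => e.symm.monotone (monotone_projIci h)
  have left_inv : ∀ s, 0 ≤ s → (e.symm (projIci 0 (a s)) : ℝ) = s := fun s hs => by
    rw [projIci_of_mem (ha.nonneg_s9 hs)]
    exact congrArg Subtype.val (e.symm_apply_apply ⟨s, hs⟩)
  refine ⟨fun r => e.symm (projIci 0 r), ⟨?_, ?_, ?_, ?_⟩, fun r hr => ?_, left_inv⟩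
  · exact (continuous_subtype_val.comp (e.symm.continuous.comp
      ((continuous_const.max continuous_id).subtype_mk _))).continuousOn
  · exact fun r hr r' hr' h => e.symm.strictMono (strictMonoOn_projIci hr hr' h)
  · simpa [ha.2.2.1] using left_inv 0 le_rfl
  · exact tendsto_atTop_atTop_of_monotone hg_mono fun b =>
      ⟨a (max b 0), (le_max_left b 0).trans (left_inv _ (le_max_right b 0)).ge⟩
  · have := congrArg Subtype.val (e.apply_symm_apply (projIci 0 r))
    rwa [coe_projIci, max_eq_right hr] at this

lemma le_apply_mul_of_rightInverse (ha : IsKInf a) (hg : IsKInf g)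
    (hag : ∀ r, 0 ≤ r → a (g r) = r) {r c : ℝ} (hr : 0 ≤ r) (hc : 1 ≤ c) : r ≤ a (c * g r) :=
  calc r = a (g r) := (hag r hr).symm
    _ ≤ a (c * g r) := ha.monotoneOn (hg.nonneg_s9 hr) (mul_nonneg (by linarith) (hg.nonneg_s9 hr))
        (le_mul_of_one_le_left (hg.nonneg_s9 hr) hc)

end IsKInf

lemma isKL_comp_mul_rpow {a g : ℝ → ℝ} (hg : IsKInf g) (ha : IsKInf a) {l : ℝ} (hl₀ : 0 < l)
    (hl₁ : l < 1) : IsKL fun s t => g (a s * l ^ t) := by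
  have hnonneg : ∀ {s} (t : ℝ), 0 ≤ s → 0 ≤ a s * l ^ t := fun t hs =>
    mul_nonneg (ha.nonneg_s9 hs) (Real.rpow_nonneg hl₀.le t)
  refine ⟨?_, fun t _ => ?_, fun s hs => ⟨?_, ?_⟩⟩
  · refine hg.1.comp ((ha.1.comp continuousOn_fst fun p hp => hp.1).mul ?_) fun p hp =>
      hnonneg p.2 hp.1
    exact ((Real.continuous_const_rpow hl₀.ne').comp continuous_snd).continuousOn
  · have := hg.comp (ha.mul_const (Real.rpow_pos_of_pos hl₀ t))
    exact ⟨this.2.1, this.2.2.1⟩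
  · exact fun t _ t' _ htt' => hg.monotoneOn (hnonneg t' hs) (hnonneg t hs)
      (mul_le_mul_of_nonneg_left (Real.rpow_le_rpow_of_exponent_ge hl₀ hl₁.le htt') (ha.nonneg_s9 hs))
  · have hpow : Tendsto (fun t : ℝ => a s * l ^ t) atTop (𝓝[Ici 0] 0) := by
      refine tendsto_nhdsWithin_iff.mpr ⟨?_, Eventually.of_forall fun t => hnonneg t hs⟩
      simpa using (tendsto_rpow_atTop_of_base_lt_one l (by linarith) hl₁).const_mul (a s)
    have hg0 := (hg.1 0 self_mem_Ici).tendsto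
    rw [hg.2.2.1] at hg0
    exact hg0.comp hpow

lemma exists_lt_one_le_sq {lam : ℝ} (hlam : lam < 1) : ∃ l : ℝ, 0 < l ∧ l < 1 ∧ lam ≤ l ^ 2 :=
  ⟨(1 + max lam 0) / 2, by positivity, by linarith [max_lt hlam one_pos],
    by nlinarith [le_max_left lam 0, le_max_right lam 0]⟩

lemma mul_add_le_max_div {lam l z b : ℝ} (hl₀ : 0 < l) (hl₁ : l < 1) (hlam : lam ≤ l ^ 2)
    (hz : 0 ≤ z) : lam * z + b ≤ max (l * z) (b / (1 - l)) := by
  have hlz : lam * z ≤ l ^ 2 * z := mul_le_mul_of_nonneg_right hlam hz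
  rcases le_or_gt b ((1 - l) * (l * z)) with hb | hb
  · exact le_max_of_le_left (by nlinarith)
  · refine le_max_of_le_right ((le_div_iff₀ (by linarith)).mpr ?_)
    nlinarith

lemma le_pow_or_exists_le_of_le_mul_add {v b : ℕ → ℝ} {lam l : ℝ} {t₀ : ℕ} (hl₀ : 0 < l)
    (hl₁ : l < 1) (hlam : lam ≤ l ^ 2) (hv : ∀ n, 0 ≤ v n)
    (hstep : ∀ n, t₀ ≤ n → v (n + 1) ≤ lam * v n + b n) {t : ℕ} (ht : t₀ ≤ t) :
    v t ≤ v t₀ * l ^ (t - t₀) ∨ ∃ τ ∈ Ico t₀ t, v t ≤ b τ * (l * (1 - l))⁻¹ * l ^ (t - τ) := by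
  induction t, ht using Nat.le_induction with
  | base => simp
  | succ n hn ih =>
    have hmax := (hstep n hn).trans (mul_add_le_max_div hl₀ hl₁ hlam (hv n))
    rcases le_max_iff.mp hmax with h | h
    · rcases ih with ih | ⟨τ, hτ, ih⟩
      · left
        calc v (n + 1) ≤ l * (v t₀ * l ^ (n - t₀)) := h.trans (by gcongr)
          _ = v t₀ * l ^ (n + 1 - t₀) := by rw [Nat.sub_add_comm hn, pow_succ]; ring
      · right
        refine ⟨τ, ⟨hτ.1, hτ.2.trans n.lt_succ_self⟩, ?_⟩
        calc v (n + 1) ≤ l * (b τ * (l * (1 - l))⁻¹ * l ^ (n - τ)) := h.trans (by gcongr)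
          _ = b τ * (l * (1 - l))⁻¹ * l ^ (n + 1 - τ) := by
            rw [Nat.sub_add_comm hτ.2.le, pow_succ]; ring
    · right
      refine ⟨n, ⟨hn, n.lt_succ_self⟩, h.trans_eq ?_⟩
      rw [Nat.add_sub_cancel_left, pow_one]
      field_simp

lemma le_ciSup₂_of_finite {α ι : Type*} [ConditionallyCompleteLattice α] {s : Set ι}
    (hs : s.Finite) (f : ι → α) {i : ι} (hi : i ∈ s) : f i ≤ ⨆ j ∈ s, f j :=
  le_ciSup₂ (f := fun j (_ : j ∈ s) => f j) ((hs.image f).bddAbove.mono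
    (iUnion_subset fun _ => range_subset_iff.mpr fun hj => mem_image_of_mem f hj)) i hi

section Lyapunov

variable {X Y : Type*} [NormedAddCommGroup X] [NormedAddCommGroup Y] {H : ℕ → X → Y}
  {V : ℕ → X → ℝ} {a₁ μ : ℝ → ℝ}

lemma apply_norm_le_lyapunov (ha₁ : IsKInf a₁) (hμ : IsKPlus μ)
    (hV : ∀ t x, a₁ (‖H t x‖ + μ t * ‖x‖) ≤ V t x) (t : ℕ) (x : X) : a₁ ‖H t x‖ ≤ V t x := by
  have hμx : 0 ≤ μ t * ‖x‖ := mul_nonneg (hμ.2 t t.cast_nonneg).le (norm_nonneg x)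
  exact (ha₁.monotoneOn (norm_nonneg _) (add_nonneg (norm_nonneg _) hμx)
    (le_add_of_nonneg_right hμx)).trans (hV t x)

lemma lyapunov_nonneg (ha₁ : IsKInf a₁) (hμ : IsKPlus μ)
    (hV : ∀ t x, a₁ (‖H t x‖ + μ t * ‖x‖) ≤ V t x) (t : ℕ) (x : X) : 0 ≤ V t x :=
  (ha₁.nonneg_s9 (norm_nonneg _)).trans (apply_norm_le_lyapunov ha₁ hμ hV t x)

lemma norm_le_of_lyapunov_le (ha₁ : IsKInf a₁) (hμ : IsKPlus μ)
    (hV : ∀ t x, a₁ (‖H t x‖ + μ t * ‖x‖) ≤ V t x) {g₁ : ℝ → ℝ} (hg₁ : IsKInf g₁)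
    (hg₁a₁ : ∀ s, 0 ≤ s → g₁ (a₁ s) = s) {t : ℕ} {x : X} {c : ℝ} (h : V t x ≤ c) :
    ‖H t x‖ ≤ g₁ c :=
  calc ‖H t x‖ = g₁ (a₁ ‖H t x‖) := (hg₁a₁ _ (norm_nonneg _)).symm
    _ ≤ g₁ c := hg₁.monotoneOn (ha₁.nonneg_s9 (norm_nonneg _))
        ((lyapunov_nonneg ha₁ hμ hV t x).trans h) ((apply_norm_le_lyapunov ha₁ hμ hV t x).trans h)

end Lyapunov

theorem prop32_iv_implies_i_general {X Y U D : Type*}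
    [NormedAddCommGroup X] [NormedAddCommGroup Y] [NormedAddCommGroup U]
    (f : ℕ → D → X → U → X) (H : ℕ → X → Y)
    (V : ℕ → X → ℝ) (a₁ a₂ a₃ β φ μ : ℝ → ℝ) (lam : ℝ)
    (ha₁ : IsKInf a₁) (ha₂ : IsKInf a₂) (ha₃ : IsKInf a₃)
    (hβ : IsKPlus β) (hφ : IsKPlus φ) (hμ : IsKPlus μ)
    (hlam₁ : lam < 1)
    (hVbound : ∀ (t : ℕ) (x : X),
      a₁ (‖H t x‖ + μ t * ‖x‖) ≤ V t x ∧ V t x ≤ a₂ (β t * ‖x‖))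
    (hVdec : ∀ (t : ℕ) (d : D) (x : X) (u : U),
      V (t + 1) (f t d x u) ≤ lam * V t x + a₃ (φ t * ‖u‖)) :
    ∃ (σ : ℝ → ℝ → ℝ) (β' γ ρ : ℝ → ℝ),
      IsKL σ ∧ IsKPlus β' ∧ IsKPlus γ ∧ IsKInf ρ ∧
      ∀ (d : ℕ → D) (u : ℕ → U) (t₀ : ℕ) (x₀ : X) (x : ℕ → X),
        x t₀ = x₀ → (∀ t, t₀ ≤ t → x (t + 1) = f t (d t) (x t) (u t)) →
        ∀ t, t₀ ≤ t →
          ‖H t (x t)‖ ≤ max (σ (β' t₀ * ‖x₀‖) ((t : ℝ) - (t₀ : ℝ)))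
            (⨆ τ ∈ Set.Icc t₀ t, σ (β' τ * ρ (γ τ * ‖u τ‖)) ((t : ℝ) - (τ : ℝ))) := by
  obtain ⟨g₁, hg₁, -, hg₁a₁⟩ := ha₁.exists_inverse
  obtain ⟨g₂, hg₂, ha₂g₂, -⟩ := ha₂.exists_inverse
  obtain ⟨l, hl₀, hl₁, hlam⟩ := exists_lt_one_le_sq hlam₁
  have hK : 0 < (l * (1 - l))⁻¹ := by have := sub_pos.mpr hl₁; positivity
  have hβ₀ : ∀ t : ℕ, 0 ≤ β t := fun t => (hβ.2 t t.cast_nonneg).le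
  refine ⟨fun s t => g₁ (a₂ s * l ^ t), fun t => β t + 1, φ, g₂ ∘ fun s => a₃ s * (l * (1 - l))⁻¹,
    isKL_comp_mul_rpow hg₁ ha₂ hl₀ hl₁,
    ⟨hβ.1.add continuousOn_const, fun t ht => by linarith [hβ.2 t ht]⟩, hφ,
    hg₂.comp (ha₃.mul_const hK), ?_⟩
  intro d u t₀ x₀ x hx₀ hx t ht
  have hV := fun t x => (hVbound t x).1
  have hrate : ∀ τ ≤ t, l ^ ((t : ℝ) - τ) = l ^ (t - τ) := fun τ hτ => by
    rw [← Nat.cast_sub hτ, Real.rpow_natCast]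
  rcases le_pow_or_exists_le_of_le_mul_add (v := fun t => V t (x t))
    (b := fun τ => a₃ (φ τ * ‖u τ‖)) hl₀ hl₁ hlam (fun n => lyapunov_nonneg ha₁ hμ hV n (x n))
    (fun n hn => hx n hn ▸ hVdec n (d n) (x n) (u n)) ht with h | ⟨τ, hτ, h⟩
  · refine le_max_of_le_left (norm_le_of_lyapunov_le ha₁ hμ hV hg₁ hg₁a₁ (h.trans ?_))
    rw [hrate t₀ ht, hx₀]
    have hx₀n := norm_nonneg x₀
    gcongr ?_ * _
    exact (hVbound t₀ x₀).2.trans (ha₂.monotoneOn (mul_nonneg (hβ₀ t₀) hx₀n)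
      (mul_nonneg (by linarith [hβ₀ t₀]) hx₀n) (mul_le_mul_of_nonneg_right (by linarith) hx₀n))
  · refine le_max_of_le_right (le_trans ?_
      (le_ciSup₂_of_finite (finite_Icc t₀ t) _ (Ico_subset_Icc_self hτ)))
    refine norm_le_of_lyapunov_le ha₁ hμ hV hg₁ hg₁a₁ (h.trans ?_)
    rw [hrate τ hτ.2.le]
    gcongr ?_ * _
    exact ha₂.le_apply_mul_of_rightInverse hg₂ ha₂g₂
      (mul_nonneg (ha₃.nonneg_s9 (mul_nonneg (hφ.2 τ τ.cast_nonneg).le (norm_nonneg _))) hK.le)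
      (by linarith [hβ₀ τ])

/-- Proposition 3.2, (iv) ⇒ (i): Lyapunov sufficiency for the non-uniform in time IOS property. -/
theorem prop32_iv_implies_i {X Y U D : Type*}
    [NormedAddCommGroup X] [NormedSpace ℝ X] [NormedAddCommGroup Y] [NormedSpace ℝ Y]
    [NormedAddCommGroup U] [NormedSpace ℝ U] [Nonempty D]
    (f : ℕ → D → X → U → X) (H : ℕ → X → Y)
    (hf0 : ∀ (t : ℕ) (d : D), f t d 0 0 = 0) (hH0 : ∀ t : ℕ, H t 0 = 0)
    (hA1 : ∃ a β : ℝ → ℝ, IsKInf a ∧ IsKPlus β ∧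
      ∀ (t : ℕ) (d : D) (x : X) (u : U),
        ‖f t d x u‖ ≤ a (β t * ‖x‖) + a (β t * ‖u‖))
    (hH2 : ∀ (T : ℕ) (S : Set X), Bornology.IsBounded S → ∀ ε > (0 : ℝ),
      Bornology.IsBounded {y : Y | ∃ t ≤ T, ∃ x ∈ S, y = H t x} ∧
      ∃ δ > (0 : ℝ), ∀ t ≤ T, ∀ x ∈ S, ∀ x₀ ∈ S, ‖x - x₀‖ < δ → ‖H t x - H t x₀‖ < ε)
    (V : ℕ → X → ℝ) (a₁ a₂ a₃ β φ μ : ℝ → ℝ) (lam : ℝ)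
    (ha₁ : IsKInf a₁) (ha₂ : IsKInf a₂) (ha₃ : IsKInf a₃)
    (hβ : IsKPlus β) (hφ : IsKPlus φ) (hμ : IsKPlus μ)
    (hlam₀ : 0 < lam) (hlam₁ : lam < 1)
    (hVnonneg : ∀ (t : ℕ) (x : X), 0 ≤ V t x)
    (hVbound : ∀ (t : ℕ) (x : X),
      a₁ (‖H t x‖ + μ t * ‖x‖) ≤ V t x ∧ V t x ≤ a₂ (β t * ‖x‖))
    (hVdec : ∀ (t : ℕ) (d : D) (x : X) (u : U),
      V (t + 1) (f t d x u) ≤ lam * V t x + a₃ (φ t * ‖u‖)) :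
    ∃ (σ : ℝ → ℝ → ℝ) (β' γ ρ : ℝ → ℝ),
      IsKL σ ∧ IsKPlus β' ∧ IsKPlus γ ∧ IsKInf ρ ∧
      ∀ (d : ℕ → D) (u : ℕ → U) (t₀ : ℕ) (x₀ : X) (x : ℕ → X),
        x t₀ = x₀ → (∀ t, t₀ ≤ t → x (t + 1) = f t (d t) (x t) (u t)) →
        ∀ t, t₀ ≤ t →
          ‖H t (x t)‖ ≤ max (σ (β' t₀ * ‖x₀‖) ((t : ℝ) - (t₀ : ℝ)))
            (⨆ τ ∈ Set.Icc t₀ t, σ (β' τ * ρ (γ τ * ‖u τ‖)) ((t : ℝ) - (τ : ℝ))) :=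
  prop32_iv_implies_i_general f H V a₁ a₂ a₃ β φ μ lam ha₁ ha₂ ha₃ hβ hφ hμ hlam₁ hVbound hVdec
end
end
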